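/- The derivative of the expected discounted call payoff with respect to the initial price (the Black–Scholes Delta) equals Φ_N(d_1), where Φ_N is the standard normal CDF and d_1 = (ln(S_0/K) + (r + σ²/2)T)/(σ√T). Precisely, if Z is a standard normal random variable and S(T) = S_0 exp((r − σ²/2)T + σ√T Z), then d/dS_0 E[e^{−rT} max(S(T) − K, 0)] = Φ_N(d_1). -/

import Mathlib

open MeasureTheory ProbabilityTheory Real

-- exp shift identity for gaussian pdf
lemma gauss_shift (c z : ℝ) :
    Real.exp (c * z) * gaussianPDFReal 0 1 z = Real.exp (c ^ 2 / 2) * gaussianPDFReal c 1 z := by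
  simp only [gaussianPDFReal, NNReal.coe_one, mul_one, sub_zero]
  rw [mul_left_comm, mul_left_comm (Real.exp (c ^ 2 / 2)), ← Real.exp_add, ← Real.exp_add]
  congr 1
  rw [Real.exp_eq_exp]
  ring

-- integral wrt standard gaussian as weighted Lebesgue integral
lemma integral_gaussianReal_std (f : ℝ → ℝ) :
    ∫ z, f z ∂(gaussianReal 0 1) = ∫ z, gaussianPDFReal 0 1 z * f z := by
  rw [gaussianReal_of_var_ne_zero _ one_ne_zero]
  have : (gaussianPDF 0 1) = fun x => ((gaussianPDFReal 0 1 x).toNNReal : ENNReal) := by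
    ext x; simp [gaussianPDF, ENNReal.ofReal]
  rw [this, integral_withDensity_eq_integral_smul
    ((measurable_gaussianPDFReal 0 1).real_toNNReal)]
  congr 1 with z
  simp [NNReal.smul_def, Real.coe_toNNReal _ (gaussianPDFReal_nonneg 0 1 z)]

lemma integrable_exp_gaussian (a c : ℝ) :
    Integrable (fun z => Real.exp (a + c * z)) (gaussianReal 0 1) := by
  rw [gaussianReal_of_var_ne_zero _ one_ne_zero]
  rw [integrable_withDensity_iff (measurable_gaussianPDF 0 1)
    (Filter.Eventually.of_forall fun x => ENNReal.ofReal_lt_top)]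
  have heq : (fun z => Real.exp (a + c * z) * (gaussianPDF 0 1 z).toReal)
      = fun z => (Real.exp a * Real.exp (c ^ 2 / 2)) * gaussianPDFReal c 1 z := by
    ext z
    rw [gaussianPDF, ENNReal.toReal_ofReal (gaussianPDFReal_nonneg 0 1 z), Real.exp_add,
      mul_assoc, mul_assoc]
    congr 1
    exact gauss_shift c z
  rw [heq]
  exact (integrable_gaussianPDFReal c 1).const_mul _

-- measure computation: shifted gaussian of Ioi equals standard gaussian of Iic
lemma gauss_measure_Ioi (c t : ℝ) :
    gaussianReal c 1 (Set.Ioi t) = gaussianReal 0 1 (Set.Iic (c - t)) := by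
  have h1 : gaussianReal c 1 = (gaussianReal 0 1).map (· + c) := by
    rw [gaussianReal_map_add_const c, zero_add]
  have h2 : gaussianReal 0 1 = (gaussianReal 0 1).map (fun x => (-1 : ℝ) * x) := by
    rw [gaussianReal_map_const_mul (-1)]
    norm_num
  have hs : (fun x : ℝ => (-1 : ℝ) * x) ⁻¹' Set.Ioi (t - c) = Set.Iio (c - t) := by
    ext x
    simp only [Set.mem_preimage, Set.mem_Ioi, Set.mem_Iio, neg_one_mul]
    constructor <;> intro h <;> linarith
  have step : gaussianReal c 1 (Set.Ioi t) = gaussianReal 0 1 (Set.Iio (c - t)) := by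
    rw [h1, Measure.map_apply (measurable_add_const c) measurableSet_Ioi,
      Set.preimage_add_const_Ioi]
    nth_rewrite 1 [h2]
    rw [Measure.map_apply (measurable_const_mul (-1)) measurableSet_Ioi, hs]
  rw [step]
  have habs : gaussianReal 0 1 ≪ (volume : Measure ℝ) :=
    gaussianReal_absolutelyContinuous 0 one_ne_zero
  haveI : NullSingletonClass (gaussianReal 0 1) := ⟨fun x => habs (measure_singleton x)⟩
  exact measure_congr (Iio_ae_eq_Iic (μ := gaussianReal 0 1) (a := c - t))

/-- Black–Scholes Delta: the derivative of the expected discounted call payoff with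
respect to the initial price equals `Φ_N(d₁)`, the standard normal CDF at `d₁`. -/
theorem black_scholes_delta
    (S0 K r σ T : ℝ) (hS0 : 0 < S0) (hK : 0 < K) (hσ : 0 < σ) (hT : 0 < T) :
    HasDerivAt
      (fun s0 : ℝ => ∫ z : ℝ,
          Real.exp (-r * T) *
            max (s0 * Real.exp ((r - σ ^ 2 / 2) * T + σ * Real.sqrt T * z) - K) 0
          ∂(gaussianReal 0 1))
      ((gaussianReal 0 1 (Set.Iic
          ((Real.log (S0 / K) + (r + σ ^ 2 / 2) * T) / (σ * Real.sqrt T)))).toReal)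
      S0 := by
  have hc : 0 < σ * Real.sqrt T := mul_pos hσ (Real.sqrt_pos.2 hT)
  set c : ℝ := σ * Real.sqrt T with hc_def
  set a : ℝ := (r - σ ^ 2 / 2) * T with ha_def
  have hc2 : c ^ 2 = σ ^ 2 * T := by
    rw [hc_def, mul_pow, Real.sq_sqrt hT.le]
  set zs : ℝ := (Real.log (K / S0) - a) / c with hzs_def
  have hd1 : (Real.log (S0 / K) + (r + σ ^ 2 / 2) * T) / c = c - zs := by
    rw [hzs_def, Real.log_div hS0.ne' hK.ne', Real.log_div hK.ne' hS0.ne']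
    field_simp
    nlinarith [hc2]
  rw [hd1]
  have hEpos : ∀ z : ℝ, 0 < Real.exp (a + c * z) := fun z => Real.exp_pos _
  set F' : ℝ → ℝ :=
    Set.indicator (Set.Ioi zs) (fun z => Real.exp (-r * T) * Real.exp (a + c * z)) with hF'_def
  have habs : gaussianReal 0 1 ≪ (volume : Measure ℝ) :=
    gaussianReal_absolutelyContinuous 0 one_ne_zero
  have hKE : ∀ z : ℝ, zs < z ↔ K < S0 * Real.exp (a + c * z) := by
    intro z
    have h1 : zs < z ↔ Real.log (K / S0) < a + c * z := by
      rw [hzs_def, div_lt_iff₀ hc]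
      constructor <;> intro h <;> nlinarith
    rw [h1, Real.log_lt_iff_lt_exp (div_pos hK hS0), div_lt_iff₀ hS0, mul_comm]
  have hKE' : ∀ z : ℝ, z < zs ↔ S0 * Real.exp (a + c * z) < K := by
    intro z
    have h1 : z < zs ↔ a + c * z < Real.log (K / S0) := by
      rw [hzs_def, lt_div_iff₀ hc]
      constructor <;> intro h <;> nlinarith
    rw [h1, Real.lt_log_iff_exp_lt (div_pos hK hS0), lt_div_iff₀ hS0, mul_comm]
  have bound_int : Integrable (fun z => Real.exp (-r * T) * Real.exp (a + c * z))
      (gaussianReal 0 1) := (integrable_exp_gaussian a c).const_mul (Real.exp (-r * T))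
  have hF'_meas : AEStronglyMeasurable F' (gaussianReal 0 1) := by
    apply Measurable.aestronglyMeasurable
    apply Measurable.indicator _ measurableSet_Ioi
    fun_prop
  have h_ae : ∀ᵐ z ∂(gaussianReal 0 1), z ≠ zs := by
    rw [ae_iff]
    simp only [ne_eq, not_not, Set.setOf_eq_eq_singleton]
    exact habs (measure_singleton zs)
  have main := hasDerivAt_integral_of_dominated_loc_of_lip (𝕜 := ℝ)
    (F := fun s0 z => Real.exp (-r * T) * max (s0 * Real.exp (a + c * z) - K) 0)
    (F' := F') (x₀ := S0) (s := Metric.ball S0 1)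
    (bound := fun z => Real.exp (-r * T) * Real.exp (a + c * z))
    (Metric.ball_mem_nhds S0 one_pos)
    (Filter.Eventually.of_forall fun s => by
      apply Continuous.aestronglyMeasurable
      fun_prop)
    ?_ hF'_meas ?_ bound_int ?_
  · obtain ⟨-, hderiv⟩ := main
    refine hderiv.congr_deriv (Eq.symm ?_)
    rw [integral_gaussianReal_std]
    have hptwise : (fun z => gaussianPDFReal 0 1 z * F' z)
        = Set.indicator (Set.Ioi zs) (fun z => gaussianPDFReal c 1 z) := by
      ext z
      by_cases hz : z ∈ Set.Ioi zs
      · rw [hF'_def, Set.indicator_of_mem hz, Set.indicator_of_mem hz]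
        have ha2 : a = r * T - c ^ 2 / 2 := by rw [ha_def]; nlinarith [hc2]
        have key : Real.exp (-r * T) * Real.exp (a + c * z) * gaussianPDFReal 0 1 z
            = gaussianPDFReal c 1 z := by
          calc Real.exp (-r * T) * Real.exp (a + c * z) * gaussianPDFReal 0 1 z
              = (Real.exp (-r * T) * Real.exp a) *
                (Real.exp (c * z) * gaussianPDFReal 0 1 z) := by
                rw [Real.exp_add]; ring
            _ = (Real.exp (-r * T) * Real.exp a) *
                (Real.exp (c ^ 2 / 2) * gaussianPDFReal c 1 z) := by
                rw [gauss_shift]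
            _ = Real.exp (-r * T + a + c ^ 2 / 2) * gaussianPDFReal c 1 z := by
                rw [Real.exp_add, Real.exp_add]; ring
            _ = gaussianPDFReal c 1 z := by
                have : -r * T + a + c ^ 2 / 2 = 0 := by rw [ha2]; ring
                rw [this, Real.exp_zero, one_mul]
        linarith [key]
      · rw [hF'_def, Set.indicator_of_notMem hz, Set.indicator_of_notMem hz, mul_zero]
    rw [hptwise, integral_indicator measurableSet_Ioi]
    have htr : (gaussianReal c 1 (Set.Ioi zs)).toReal
        = ∫ z in Set.Ioi zs, gaussianPDFReal c 1 z := by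
      rw [gaussianReal_apply_eq_integral _ one_ne_zero,
        ENNReal.toReal_ofReal (setIntegral_nonneg measurableSet_Ioi
          fun x _ => gaussianPDFReal_nonneg c 1 x)]
    rw [← htr, gauss_measure_Ioi]
  · -- integrability at S0
    apply Integrable.mono (bound_int.const_mul S0)
    · apply Continuous.aestronglyMeasurable; fun_prop
    · filter_upwards with z
      rw [Real.norm_eq_abs, Real.norm_eq_abs]
      have h1 : 0 ≤ Real.exp (-r * T) * max (S0 * Real.exp (a + c * z) - K) 0 :=
        mul_nonneg (Real.exp_pos _).le (le_max_right _ _)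
      rw [abs_of_nonneg h1, abs_of_nonneg
        (by positivity : (0:ℝ) ≤ S0 * (Real.exp (-r * T) * Real.exp (a + c * z)))]
      have h2 : max (S0 * Real.exp (a + c * z) - K) 0 ≤ S0 * Real.exp (a + c * z) :=
        max_le (by linarith [hK, hEpos z]) (by positivity)
      calc Real.exp (-r * T) * max (S0 * Real.exp (a + c * z) - K) 0
          ≤ Real.exp (-r * T) * (S0 * Real.exp (a + c * z)) :=
            (mul_le_mul_iff_right₀ (Real.exp_pos _)).mpr h2
        _ = S0 * (Real.exp (-r * T) * Real.exp (a + c * z)) := by ring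
  · -- Lipschitz
    filter_upwards with z
    apply LipschitzWith.lipschitzOnWith
    rw [lipschitzWith_iff_dist_le_mul]
    intro s t
    rw [Real.dist_eq, Real.dist_eq]
    have hsplit : Real.exp (-r * T) * max (s * Real.exp (a + c * z) - K) 0
        - Real.exp (-r * T) * max (t * Real.exp (a + c * z) - K) 0
        = Real.exp (-r * T) * (max (s * Real.exp (a + c * z) - K) 0
          - max (t * Real.exp (a + c * z) - K) 0) := by ring
    rw [hsplit, abs_mul, abs_of_nonneg (Real.exp_pos (-r * T)).le]
    have hmax : |max (s * Real.exp (a + c * z) - K) 0 - max (t * Real.exp (a + c * z) - K) 0|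
        ≤ |s * Real.exp (a + c * z) - t * Real.exp (a + c * z)| := by
      have h := abs_max_sub_max_le_abs (s * Real.exp (a + c * z) - K)
        (t * Real.exp (a + c * z) - K) 0
      simpa [sub_sub_sub_cancel_right] using h
    have hE2 : |s * Real.exp (a + c * z) - t * Real.exp (a + c * z)|
        = Real.exp (a + c * z) * |s - t| := by
      rw [← sub_mul, abs_mul, abs_of_nonneg (hEpos z).le]; ring
    have hcoe : ((Real.nnabs (Real.exp (-r * T) * Real.exp (a + c * z))) : ℝ)
        = Real.exp (-r * T) * Real.exp (a + c * z) := by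
      rw [Real.coe_nnabs]; exact abs_of_nonneg (by positivity)
    rw [hcoe]
    calc Real.exp (-r * T) * |max (s * Real.exp (a + c * z) - K) 0
          - max (t * Real.exp (a + c * z) - K) 0|
        ≤ Real.exp (-r * T) * (Real.exp (a + c * z) * |s - t|) := by
          exact (mul_le_mul_iff_right₀ (Real.exp_pos _)).mpr (hmax.trans (le_of_eq hE2))
      _ = Real.exp (-r * T) * Real.exp (a + c * z) * |s - t| := by ring
  · -- a.e. differentiability
    filter_upwards [h_ae] with z hz
    rcases lt_or_gt_of_ne hz with hlt | hgt
    · -- z < zs : locally zero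
      have hKgt : S0 * Real.exp (a + c * z) < K := (hKE' z).mp hlt
      have hF'z : F' z = 0 := by
        rw [hF'_def, Set.indicator_of_notMem (by simpa using not_lt.mpr hlt.le : z ∉ Set.Ioi zs)]
      rw [hF'z]
      have hev : (fun s => Real.exp (-r * T) * max (s * Real.exp (a + c * z) - K) 0)
          =ᶠ[nhds S0] fun _ => Real.exp (-r * T) * 0 := by
        have hmem : {s : ℝ | s * Real.exp (a + c * z) < K} ∈ nhds S0 :=
          (isOpen_lt (continuous_id.mul continuous_const) continuous_const).mem_nhds hKgt
        filter_upwards [hmem] with s hs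
        rw [max_eq_right (by linarith [hs] : s * Real.exp (a + c * z) - K ≤ 0)]
      have h0 : HasDerivAt (fun _ : ℝ => Real.exp (-r * T) * 0) 0 S0 := hasDerivAt_const S0 _
      exact h0.congr_of_eventuallyEq hev
    · -- zs < z
      have hKlt : K < S0 * Real.exp (a + c * z) := (hKE z).mp hgt
      have hF'z : F' z = Real.exp (-r * T) * Real.exp (a + c * z) := by
        rw [hF'_def, Set.indicator_of_mem (Set.mem_Ioi.mpr hgt)]
      rw [hF'z]
      have hev : (fun s => Real.exp (-r * T) * max (s * Real.exp (a + c * z) - K) 0)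
          =ᶠ[nhds S0] fun s => Real.exp (-r * T) * (s * Real.exp (a + c * z) - K) := by
        have hmem : {s : ℝ | K < s * Real.exp (a + c * z)} ∈ nhds S0 :=
          (isOpen_lt continuous_const (continuous_id.mul continuous_const)).mem_nhds hKlt
        filter_upwards [hmem] with s hs
        rw [max_eq_left (by linarith [hs] : (0:ℝ) ≤ s * Real.exp (a + c * z) - K)]
      have hd : HasDerivAt (fun s => Real.exp (-r * T) * (s * Real.exp (a + c * z) - K))
          (Real.exp (-r * T) * Real.exp (a + c * z)) S0 := by
        have := (((hasDerivAt_id S0).mul_const (Real.exp (a + c * z))).sub_const K).const_mul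
          (Real.exp (-r * T))
        simpa using this
      exact hd.congr_of_eventuallyEq hev
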